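/- Let B be a right closed bicategory. A 1-cell M : A ⇸ B is right dualizable if and only if the canonical map μ : M ⊙ (M ▷ U_B) → M ▷ M, adjoint to the composite M ⊙ (M ▷ U_B) ⊙ M → M ⊙ U_B ≅ M (where the first map uses the counit of the ((−) ⊙ M, M ▷ (−)) adjunction), is an isomorphism. -/

import Mathlib

/-!
If `M ⊣ N`, then `M ▷ P ≅ P ≫ N` for every `P`, with the counit as evaluation; under these
identifications `μ` becomes the identity of `M ≫ N`, so it is invertible.

Conversely, if `μ` is invertible, the transpose `𝟙 a ⟶ M ▷ M` of `λ_ M` followed by `μ⁻¹` is a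
unit `𝟙 a ⟶ M ≫ (M ▷ 𝟙 b)` for the counit `ev M (𝟙 b)`: the left triangle identity is the
defining equation of `μ`, and the right one follows from it by the couniversality of `ev`.
-/

open CategoryTheory Bicategory

universe w v u

/-- A right closed structure on a bicategory. -/
structure RightClosedStruct (B : Type u) [Bicategory.{w, v} B] where
  /-- The right internal hom `N ▷ P` of 1-cells. -/
  rhom : ∀ {a b c : B}, (b ⟶ c) → (a ⟶ c) → (a ⟶ b)
  /-- The evaluation (counit) 2-cell of the `((−) ≫ N, N ▷ (−))` adjunction. -/
  ev : ∀ {a b c : B} (N : b ⟶ c) (P : a ⟶ c), rhom N P ≫ N ⟶ P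
  /-- The couniversal property giving the bijection `B(X ≫ N, P) ≅ B(X, N ▷ P)`. -/
  homEquiv : ∀ {a b c : B} (N : b ⟶ c) (P : a ⟶ c) (X : a ⟶ b) (α : X ≫ N ⟶ P),
    ∃! β : X ⟶ rhom N P, β ▷ N ≫ ev N P = α

namespace RightClosedStruct

variable {B : Type u} [Bicategory.{w, v} B] (C : RightClosedStruct B)

theorem hom_ext {a b c : B} {N : b ⟶ c} {P : a ⟶ c} {X : a ⟶ b} {β₁ β₂ : X ⟶ C.rhom N P}
    (h : β₁ ▷ N ≫ C.ev N P = β₂ ▷ N ≫ C.ev N P) : β₁ = β₂ :=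
  (C.homEquiv N P X _).unique h rfl

noncomputable def curry {a b c : B} {N : b ⟶ c} {P : a ⟶ c} {X : a ⟶ b} (α : X ≫ N ⟶ P) :
    X ⟶ C.rhom N P :=
  (C.homEquiv N P X α).exists.choose

theorem curry_whiskerRight_ev {a b c : B} {N : b ⟶ c} {P : a ⟶ c} {X : a ⟶ b}
    (α : X ≫ N ⟶ P) : C.curry α ▷ N ≫ C.ev N P = α :=
  (C.homEquiv N P X α).exists.choose_spec

theorem isIso_of_whiskerRight_ev_eq_counit {a b x : B} {M : a ⟶ b} {N : b ⟶ a} (adj : M ⊣ N)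
    {P : x ⟶ b} (β : P ≫ N ⟶ C.rhom M P)
    (hβ : β ▷ M ≫ C.ev M P = (α_ P N M).hom ≫ P ◁ adj.counit ≫ (ρ_ P).hom) : IsIso β := by
  let ν : C.rhom M P ⟶ P ≫ N :=
    (ρ_ _).inv ≫ C.rhom M P ◁ adj.unit ≫ (α_ _ M N).inv ≫ C.ev M P ▷ N
  have hβν : β ≫ ν = 𝟙 _ :=
    calc β ≫ ν
        = 𝟙 _ ⊗≫ (β ▷ 𝟙 a ≫ C.rhom M P ◁ adj.unit) ⊗≫ C.ev M P ▷ N ⊗≫ 𝟙 _ := by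
          bicategory
      _ = 𝟙 _ ⊗≫ (P ≫ N) ◁ adj.unit ⊗≫ (β ▷ M ≫ C.ev M P) ▷ N ⊗≫ 𝟙 _ := by
          rw [← whisker_exchange]; bicategory
      _ = 𝟙 _ ⊗≫ P ◁ rightZigzag adj.unit adj.counit ⊗≫ 𝟙 _ := by
          rw [hβ]; bicategory
      _ = 𝟙 _ := by
          rw [adj.right_triangle]; bicategory
  have hνβ : ν ≫ β = 𝟙 _ := by
    apply C.hom_ext
    calc (ν ≫ β) ▷ M ≫ C.ev M P
        = 𝟙 _ ⊗≫ C.rhom M P ◁ adj.unit ▷ M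
            ⊗≫ (C.ev M P ▷ (N ≫ M) ≫ P ◁ adj.counit) ⊗≫ 𝟙 _ := by
          rw [comp_whiskerRight, Category.assoc, hβ]; bicategory
      _ = 𝟙 _ ⊗≫ C.rhom M P ◁ leftZigzag adj.unit adj.counit ⊗≫ C.ev M P ⊗≫ 𝟙 _ := by
          rw [← whisker_exchange]; bicategory
      _ = 𝟙 _ ▷ M ≫ C.ev M P := by
          rw [adj.left_triangle]; bicategory
  exact ⟨ν, hβν, hνβ⟩

theorem isIso_mu_of_adjunction {a b : B} {M : a ⟶ b} {N : b ⟶ a} (adj : M ⊣ N)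
    (μ : M ≫ C.rhom M (𝟙 b) ⟶ C.rhom M M)
    (hμ : μ ▷ M ≫ C.ev M M =
      (α_ M (C.rhom M (𝟙 b)) M).hom ≫ M ◁ C.ev M (𝟙 b) ≫ (ρ_ M).hom) :
    IsIso μ := by
  let φ : N ⟶ C.rhom M (𝟙 b) :=
    (λ_ N).inv ≫ C.curry ((α_ (𝟙 b) N M).hom ≫ 𝟙 b ◁ adj.counit ≫ (ρ_ _).hom)
  have : IsIso φ := by
    have := C.isIso_of_whiskerRight_ev_eq_counit adj (P := 𝟙 b) _ (C.curry_whiskerRight_ev _)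
    infer_instance
  have : IsIso (M ◁ φ ≫ μ) := by
    refine C.isIso_of_whiskerRight_ev_eq_counit adj _ ?_
    calc (M ◁ φ ≫ μ) ▷ M ≫ C.ev M M
        = (α_ M N M).hom ≫ M ◁ (φ ▷ M ≫ C.ev M (𝟙 b)) ≫ (ρ_ M).hom := by
          rw [comp_whiskerRight, Category.assoc, hμ]; bicategory
      _ = (α_ M N M).hom ≫ M ◁ adj.counit ≫ (ρ_ M).hom := by
          rw [comp_whiskerRight, Category.assoc, curry_whiskerRight_ev]; bicategory
  exact IsIso.of_isIso_comp_left (M ◁ φ) μ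

noncomputable def adjunctionOfLeftZigzag {a b : B} {M : a ⟶ b}
    (η : 𝟙 a ⟶ M ≫ C.rhom M (𝟙 b))
    (h : leftZigzag η (C.ev M (𝟙 b)) = (λ_ M).hom ≫ (ρ_ M).inv) : M ⊣ C.rhom M (𝟙 b) where
  unit := η
  counit := C.ev M (𝟙 b)
  left_triangle := h
  right_triangle := by
    have key : (ρ_ _).inv ≫ rightZigzag η (C.ev M (𝟙 b)) ≫ (λ_ _).hom = 𝟙 _ := by
      apply C.hom_ext
      calc ((ρ_ _).inv ≫ rightZigzag η (C.ev M (𝟙 b)) ≫ (λ_ _).hom) ▷ M ≫ C.ev M (𝟙 b)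
          = 𝟙 _ ⊗≫ C.rhom M (𝟙 b) ◁ η ▷ M
              ⊗≫ (C.ev M (𝟙 b) ▷ (C.rhom M (𝟙 b) ≫ M) ≫ 𝟙 b ◁ C.ev M (𝟙 b)) ⊗≫ 𝟙 _ := by
            bicategory
        _ = 𝟙 _ ⊗≫ C.rhom M (𝟙 b) ◁ leftZigzag η (C.ev M (𝟙 b)) ⊗≫ C.ev M (𝟙 b) ⊗≫ 𝟙 _ := by
            rw [← whisker_exchange]; bicategory
        _ = 𝟙 _ ▷ M ≫ C.ev M (𝟙 b) := by
            rw [h]; bicategory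
    calc rightZigzag η (C.ev M (𝟙 b))
        = (ρ_ _).hom ≫ ((ρ_ _).inv ≫ rightZigzag η (C.ev M (𝟙 b)) ≫ (λ_ _).hom) ≫ (λ_ _).inv := by
          simp
      _ = (ρ_ _).hom ≫ (λ_ _).inv := by
          rw [key, Category.id_comp]

noncomputable def adjunctionOfIsIsoMu {a b : B} {M : a ⟶ b}
    (μ : M ≫ C.rhom M (𝟙 b) ⟶ C.rhom M M) [IsIso μ]
    (hμ : μ ▷ M ≫ C.ev M M =
      (α_ M (C.rhom M (𝟙 b)) M).hom ≫ M ◁ C.ev M (𝟙 b) ≫ (ρ_ M).hom) :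
    M ⊣ C.rhom M (𝟙 b) :=
  C.adjunctionOfLeftZigzag (C.curry (λ_ M).hom ≫ inv μ) <|
    calc leftZigzag (C.curry (λ_ M).hom ≫ inv μ) (C.ev M (𝟙 b))
        = (C.curry (λ_ M).hom ≫ inv μ) ▷ M ≫ (μ ▷ M ≫ C.ev M M) ≫ (ρ_ M).inv := by
          rw [hμ]; bicategory
      _ = (C.curry (λ_ M).hom ▷ M ≫ C.ev M M) ≫ (ρ_ M).inv := by
          simp
      _ = (λ_ M).hom ≫ (ρ_ M).inv := by
          rw [curry_whiskerRight_ev]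

end RightClosedStruct

/-- In a right closed bicategory, `M` is right dualizable iff the canonical 2-cell
`μ : M ≫ (M ▷ 𝟙 b) ⟶ M ▷ M` is invertible. -/
theorem rightDualizable_iff_isIso_mu {B : Type u} [Bicategory.{w, v} B]
    (C : RightClosedStruct B) {a b : B} (M : a ⟶ b)
    (μ : M ≫ C.rhom M (𝟙 b) ⟶ C.rhom M M)
    (hμ : μ ▷ M ≫ C.ev M M =
      (α_ M (C.rhom M (𝟙 b)) M).hom ≫ M ◁ C.ev M (𝟙 b) ≫ (ρ_ M).hom) :
    (∃ N : b ⟶ a, Nonempty (Bicategory.Adjunction M N)) ↔ IsIso μ :=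
  ⟨fun ⟨_, ⟨adj⟩⟩ ↦ C.isIso_mu_of_adjunction adj μ hμ,
    fun _ ↦ ⟨_, ⟨C.adjunctionOfIsIsoMu μ hμ⟩⟩⟩
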